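/- arXiv:1803.06360 — 2 statements merged into one kernel-verified Lean document; each statement's English description precedes it below -/
import Mathlib

section
/- (Levi-Civita connection formula) On the probability simplex with Wasserstein metric g_W(σ,τ)=σᵀL(ρ)^†τ, the Levi-Civita connection of two constant (coordinate) vector fields σ₁,σ₂ at ρ is ∇^W_{σ₁}σ₂ = −(1/2)[L(σ₁)L(ρ)^†σ₂ + L(σ₂)L(ρ)^†σ₁] + (1/2)L(ρ)(∇_GL(ρ)^†σ₁ ∘ ∇_GL(ρ)^†σ₂); i.e., this vector satisfies the Koszul formula g_W(∇^W_{σ₁}σ₂, σ₃) = (1/2){σ₁(g_W(σ₂,σ₃)) + σ₂(g_W(σ₁,σ₃)) − σ₃(g_W(σ₁,σ₂))} for all zero-sum σ₃, where σ(f)(ρ)=d/dt|_{t=0} f(ρ+tσ). -/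
open Matrix

/-- Discrete gradient matrix `D ∈ ℝ^{|E|×n}` with entries `±√ω_{ij}`. -/
noncomputable def gradMat {n : ℕ} {E : Type} (sE tE : E → Fin n) (w : E → ℝ) :
    Matrix E (Fin n) ℝ :=
  fun e k => if k = sE e then Real.sqrt (w e) else if k = tE e then -Real.sqrt (w e) else 0

/-- Weighted graph Laplacian `L(a) = Dᵀ Θ(a) D` with `Θ(a)` diagonal with entries
`(a_i + a_j)/2` on edges. -/
noncomputable def Lw {n : ℕ} {E : Type} [Fintype E] [DecidableEq E] (sE tE : E → Fin n) (w : E → ℝ)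
    (a : Fin n → ℝ) : Matrix (Fin n) (Fin n) ℝ :=
  (gradMat sE tE w)ᵀ * Matrix.diagonal (fun e => (a (sE e) + a (tE e)) / 2) * gradMat sE tE w

/-- `B` is the Moore–Penrose pseudoinverse of `A` (the four Penrose conditions). -/
def IsPInv {n : ℕ} (A B : Matrix (Fin n) (Fin n) ℝ) : Prop :=
  A * B * A = A ∧ B * A * B = B ∧ (A * B)ᵀ = A * B ∧ (B * A)ᵀ = B * A

/-- Vertex-wise circle product of the gradient fields of two potentials:
`(∇_GΦ ∘ ∇_GΨ)_i = (1/2)·Σ_{j ∈ N(i)} ω_{ij}(Φ_i − Φ_j)(Ψ_i − Ψ_j)`. -/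
noncomputable def circ {n : ℕ} {E : Type} [Fintype E] (sE tE : E → Fin n) (w : E → ℝ)
    (Φ Ψ : Fin n → ℝ) : Fin n → ℝ :=
  fun i => (1 / 2) *
    ∑ e : E, (if sE e = i ∨ tE e = i then
      w e * (Φ (sE e) - Φ (tE e)) * (Ψ (sE e) - Ψ (tE e)) else 0)

/-- The normalized all-ones vector `u₀ = (1/√n)(1,…,1)ᵀ`. -/
noncomputable def onesVec (n : ℕ) : Fin n → ℝ := fun _ => 1 / Real.sqrt n

/-!
The metric tensor at `ρ + tσ` is `G(t) = (L(ρ + tσ) + u₀u₀ᵀ)⁻¹` and `L` is linear, so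
`G' = -G L(σ) G`. On zero-sum vectors `G(0)` agrees with `L(ρ)^†`, since `L(ρ)^†` maps into the
orthogonal complement of the constants, where the rank-one term vanishes. Hence
`σ_a(g(σ_b, σ_c)) = -(L(ρ)^†σ_b)ᵀ L(σ_a) (L(ρ)^†σ_c)`. As `⟨∇Φ ∘ ∇Ψ, a⟩ = Φᵀ L(a) Ψ` and
`L(ρ) L(ρ)^† σ₃ = σ₃`, both sides of the Koszul formula are the same combination of three such
terms.
-/

open Filter Topology

namespace Matrix

theorem IsSymm.vecMul_eq_mulVec {n : Type*} [Fintype n] {A : Matrix n n ℝ} (hA : A.IsSymm)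
    (x : n → ℝ) : x ᵥ* A = A *ᵥ x := by
  rw [← mulVec_transpose, hA.eq]

theorem IsSymm.mulVec_dotProduct {n : Type*} [Fintype n] {A : Matrix n n ℝ} (hA : A.IsSymm)
    (x y : n → ℝ) : (A *ᵥ x) ⬝ᵥ y = x ⬝ᵥ (A *ᵥ y) := by
  rw [dotProduct_mulVec, hA.vecMul_eq_mulVec]

end Matrix

section Laplacian

variable {n : ℕ} {E : Type} (sE tE : E → Fin n) (w : E → ℝ)

theorem gradMat_mulVec_of_eq {e : E} (he : sE e = tE e) (Φ : Fin n → ℝ) :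
    (gradMat sE tE w *ᵥ Φ) e = √(w e) * Φ (sE e) := by
  rw [mulVec, dotProduct, Fintype.sum_eq_single (sE e) fun k hk => by simp [gradMat, hk, ← he]]
  simp [gradMat]

theorem gradMat_mulVec_of_ne {e : E} (he : sE e ≠ tE e) (Φ : Fin n → ℝ) :
    (gradMat sE tE w *ᵥ Φ) e = √(w e) * (Φ (sE e) - Φ (tE e)) := by
  rw [mulVec, dotProduct, Fintype.sum_eq_add (sE e) (tE e) he fun k hk => by simp [gradMat, hk]]
  simp [gradMat, he.symm]
  ring

variable [Fintype E]

theorem circ_dotProduct (hloop : ∀ e, sE e ≠ tE e) (Φ Ψ a : Fin n → ℝ) :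
    circ sE tE w Φ Ψ ⬝ᵥ a =
      ∑ e, (a (sE e) + a (tE e)) / 2 * (w e * (Φ (sE e) - Φ (tE e)) * (Ψ (sE e) - Ψ (tE e))) := by
  have hends : ∀ e, ∑ i, (if sE e = i ∨ tE e = i then a i else 0) = a (sE e) + a (tE e) :=
    fun e => by
      rw [Fintype.sum_eq_add (sE e) (tE e) (hloop e) fun k hk => by
        simp [Ne.symm hk.1, Ne.symm hk.2]]
      simp
  simp only [circ, dotProduct, Finset.mul_sum, Finset.sum_mul]
  rw [Finset.sum_comm]
  refine Finset.sum_congr rfl fun e _ => ?_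
  rw [← hends, Finset.sum_div, Finset.sum_mul]
  refine Finset.sum_congr rfl fun i _ => ?_
  split_ifs <;> ring

variable [DecidableEq E]

theorem dotProduct_Lw_mulVec (a Φ Ψ : Fin n → ℝ) :
    Φ ⬝ᵥ (Lw sE tE w a *ᵥ Ψ) =
      ∑ e, (a (sE e) + a (tE e)) / 2 * ((gradMat sE tE w *ᵥ Φ) e * (gradMat sE tE w *ᵥ Ψ) e) := by
  rw [Lw, ← mulVec_mulVec, ← mulVec_mulVec, dotProduct_mulVec, vecMul_transpose]
  simp only [dotProduct, mulVec_diagonal]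
  exact Finset.sum_congr rfl fun e _ => by ring

theorem dotProduct_Lw_mulVec_of_ne (hloop : ∀ e, sE e ≠ tE e) (hw : ∀ e, 0 ≤ w e)
    (a Φ Ψ : Fin n → ℝ) :
    Φ ⬝ᵥ (Lw sE tE w a *ᵥ Ψ) =
      ∑ e, (a (sE e) + a (tE e)) / 2 * (w e * (Φ (sE e) - Φ (tE e)) * (Ψ (sE e) - Ψ (tE e))) := by
  rw [dotProduct_Lw_mulVec]
  refine Finset.sum_congr rfl fun e _ => ?_
  rw [gradMat_mulVec_of_ne _ _ _ (hloop e), gradMat_mulVec_of_ne _ _ _ (hloop e)]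
  linear_combination (a (sE e) + a (tE e)) / 2 * (Φ (sE e) - Φ (tE e)) * (Ψ (sE e) - Ψ (tE e)) *
    Real.mul_self_sqrt (hw e)

theorem circ_dotProduct_eq_dotProduct_Lw_mulVec (hloop : ∀ e, sE e ≠ tE e) (hw : ∀ e, 0 ≤ w e)
    (Φ Ψ a : Fin n → ℝ) : circ sE tE w Φ Ψ ⬝ᵥ a = Φ ⬝ᵥ (Lw sE tE w a *ᵥ Ψ) := by
  rw [circ_dotProduct _ _ _ hloop, dotProduct_Lw_mulVec_of_ne _ _ _ hloop hw]

theorem Lw_isSymm (a : Fin n → ℝ) : (Lw sE tE w a).IsSymm := by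
  rw [IsSymm, Lw, transpose_mul, transpose_mul, diagonal_transpose, transpose_transpose,
    Matrix.mul_assoc]

theorem Lw_add (a b : Fin n → ℝ) : Lw sE tE w (a + b) = Lw sE tE w a + Lw sE tE w b := by
  rw [Lw, Lw, Lw, ← Matrix.add_mul, ← Matrix.mul_add, diagonal_add]
  congr 3
  funext e
  simp only [Pi.add_apply]
  ring

theorem Lw_smul (t : ℝ) (a : Fin n → ℝ) : Lw sE tE w (t • a) = t • Lw sE tE w a := by
  rw [Lw, Lw, ← Matrix.smul_mul, ← Matrix.mul_smul, ← diagonal_smul]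
  congr 3
  funext e
  simp only [Pi.smul_apply, smul_eq_mul]
  ring

-- At a self-loop the row of `gradMat` is `√(w e)` at one vertex, so it does not kill constants.
theorem sE_ne_tE_of_Lw_mulVec_const (hw : ∀ e, 0 < w e) {a : Fin n → ℝ} (ha : ∀ i, 0 < a i)
    (hker : Lw sE tE w a *ᵥ (fun _ => 1) = 0) (e : E) : sE e ≠ tE e := by
  intro he
  have hzero := dotProduct_Lw_mulVec sE tE w a (fun _ => 1) (fun _ => 1)
  rw [hker, dotProduct_zero, eq_comm, Finset.sum_eq_zero_iff_of_nonneg fun e _ =>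
    mul_nonneg (by linarith [ha (sE e), ha (tE e)]) (mul_self_nonneg _)] at hzero
  have hpos : 0 < (a (sE e) + a (tE e)) / 2 *
      ((gradMat sE tE w *ᵥ fun _ => 1) e * (gradMat sE tE w *ᵥ fun _ => 1) e) := by
    rw [gradMat_mulVec_of_eq _ _ _ he, mul_one, Real.mul_self_sqrt (hw e).le]
    have := ha (sE e); have := ha (tE e); have := hw e
    positivity
  exact hpos.ne' (hzero e (Finset.mem_univ e))

end Laplacian

namespace IsPInv

variable {n : ℕ} {A B : Matrix (Fin n) (Fin n) ℝ}

theorem dotProduct_mulVec_eq_zero (h : IsPInv A B) {Φ : Fin n → ℝ} (hΦ : A *ᵥ Φ = 0)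
    (v : Fin n → ℝ) : Φ ⬝ᵥ (B *ᵥ v) = 0 := by
  obtain ⟨-, hBAB, -, hBA⟩ := h
  rw [← hBAB, ← mulVec_mulVec, dotProduct_mulVec, ← mulVec_transpose, hBA, ← mulVec_mulVec, hΦ,
    mulVec_zero, zero_dotProduct]

theorem mulVec_mulVec_eq_self (h : IsPInv A B) {σ : Fin n → ℝ}
    (hσ : ∀ Φ, Φ ᵥ* A = 0 → Φ ⬝ᵥ σ = 0) : A *ᵥ (B *ᵥ σ) = σ := by
  obtain ⟨hABA, -, hAB, -⟩ := h
  -- `r` is in the left kernel of `A` and orthogonal to its range, hence `r ⬝ᵥ r = 0`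
  set r := σ - A *ᵥ (B *ᵥ σ)
  have hr : r ᵥ* A = 0 := by
    rw [sub_vecMul, mulVec_mulVec, ← vecMul_transpose, hAB, vecMul_vecMul, hABA, sub_self]
  have : r ⬝ᵥ r = 0 := by
    rw [dotProduct_sub r σ, hσ r hr, dotProduct_mulVec, hr, zero_dotProduct, sub_zero]
  exact (sub_eq_zero.1 (dotProduct_self_eq_zero.1 this)).symm

theorem mulVec_mulVec_eq_self_of_sum_eq_zero (h : IsPInv A B) (hA : A.IsSymm)
    (hker : ∀ Φ, A *ᵥ Φ = 0 → ∃ c : ℝ, ∀ i, Φ i = c) {σ : Fin n → ℝ} (hσ : ∑ i, σ i = 0) :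
    A *ᵥ (B *ᵥ σ) = σ :=
  h.mulVec_mulVec_eq_self fun Φ hΦ => by
    obtain ⟨c, hc⟩ := hker Φ (by rwa [← hA.vecMul_eq_mulVec])
    simp [dotProduct, hc, ← Finset.mul_sum, hσ]

theorem add_vecMulVec_mulVec_mulVec (h : IsPInv A B) (hA : A.IsSymm)
    (hker : ∀ Φ, A *ᵥ Φ = 0 → ∃ c : ℝ, ∀ i, Φ i = c) {u : Fin n → ℝ} (hu : A *ᵥ u = 0)
    {σ : Fin n → ℝ} (hσ : ∑ i, σ i = 0) : (A + vecMulVec u u) *ᵥ (B *ᵥ σ) = σ := by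
  rw [add_mulVec, h.mulVec_mulVec_eq_self_of_sum_eq_zero hA hker hσ, vecMulVec_mulVec,
    h.dotProduct_mulVec_eq_zero hu, MulOpposite.op_zero, zero_smul, add_zero]

end IsPInv

theorem hasDerivAt_of_eventually_isInverse {R : Type*} [NormedRing R] [NormedAlgebra ℝ R]
    [HasSummableGeomSeries R] {A G : ℝ → R} {A' : R} {t₀ : ℝ} (hA : HasDerivAt A A' t₀)
    (hG : ∀ᶠ t in 𝓝 t₀, G t * A t = 1 ∧ A t * G t = 1) :
    HasDerivAt G (-(G t₀ * A' * G t₀)) t₀ := by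
  have hinv : G =ᶠ[𝓝 t₀] fun t => Ring.inverse (A t) :=
    hG.mono fun t ht => (Ring.inverse_unit ⟨A t, G t, ht.2, ht.1⟩).symm
  let x : Rˣ := ⟨A t₀, G t₀, hG.self_of_nhds.2, hG.self_of_nhds.1⟩
  refine (((hasFDerivAt_ringInverse (𝕜 := ℝ) x).comp_hasDerivAt t₀ hA).congr_of_eventuallyEq
    hinv).congr_deriv ?_
  simp [x]

section MatrixCalculus

-- Any submultiplicative norm would do: only derivatives of real functions leave this section.
attribute [local instance] Matrix.linftyOpNormedAddCommGroup Matrix.linftyOpNormedSpace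
  Matrix.linftyOpNormedRing Matrix.linftyOpNormedAlgebra

variable {n : Type*} [Fintype n]

theorem HasDerivAt.dotProduct_mulVec {G : ℝ → Matrix n n ℝ} {G' : Matrix n n ℝ} {t₀ : ℝ}
    (hG : HasDerivAt G G' t₀) (v u : n → ℝ) :
    HasDerivAt (fun t => v ⬝ᵥ (G t *ᵥ u)) (v ⬝ᵥ (G' *ᵥ u)) t₀ := by
  let ℓ : Matrix n n ℝ →ₗ[ℝ] ℝ :=
    { toFun := fun B => v ⬝ᵥ (B *ᵥ u)
      map_add' := fun A B => by simp [add_mulVec, dotProduct_add]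
      map_smul' := fun c A => by simp [smul_mulVec, dotProduct_smul] }
  exact ℓ.toContinuousLinearMap.hasFDerivAt.comp_hasDerivAt t₀ hG

theorem deriv_dotProduct_inverse_mulVec [DecidableEq n] {M L : Matrix n n ℝ}
    {G : ℝ → Matrix n n ℝ} (hG : ∀ᶠ t in 𝓝 0, G t * (M + t • L) = 1 ∧ (M + t • L) * G t = 1)
    {x y v u : n → ℝ} (hx : x ᵥ* M = v) (hy : M *ᵥ y = u) :
    deriv (fun t => v ⬝ᵥ (G t *ᵥ u)) 0 = -(x ⬝ᵥ (L *ᵥ y)) := by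
  have hA := ((hasDerivAt_id (0 : ℝ)).smul_const L).const_add M
  have hG0 : G 0 * M = 1 ∧ M * G 0 = 1 := by simpa using hG.self_of_nhds
  rw [((hasDerivAt_of_eventually_isInverse hA hG).dotProduct_mulVec v u).deriv, ← hx, ← hy,
    one_smul, neg_mulVec, dotProduct_neg, ← mulVec_mulVec, ← mulVec_mulVec, mulVec_mulVec y (G 0) M,
    hG0.1, one_mulVec, dotProduct_mulVec, vecMul_vecMul, hG0.2, vecMul_one]

end MatrixCalculus

theorem levi_civita_koszul_general
    {n : ℕ} {E : Type} [Fintype E] [DecidableEq E]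
    (sE tE : E → Fin n) (w : E → ℝ)
    (hw : ∀ e, 0 < w e)
    (ρ : Fin n → ℝ) (hρ : ∀ i, 0 < ρ i)
    (Ldag : Matrix (Fin n) (Fin n) ℝ) (hpinv : IsPInv (Lw sE tE w ρ) Ldag)
    (hker : ∀ Φ : Fin n → ℝ, Lw sE tE w ρ *ᵥ Φ = 0 ↔ ∃ c : ℝ, ∀ i, Φ i = c)
    (Gdir : (Fin n → ℝ) → ℝ → Matrix (Fin n) (Fin n) ℝ)
    (hGdir : ∀ σ : Fin n → ℝ, ∃ ε > (0:ℝ), ∀ t : ℝ, |t| < ε →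
      Gdir σ t * (Lw sE tE w (ρ + t • σ) + vecMulVec (onesVec n) (onesVec n)) = 1 ∧
      (Lw sE tE w (ρ + t • σ) + vecMulVec (onesVec n) (onesVec n)) * Gdir σ t = 1)
    (σ₁ σ₂ σ₃ : Fin n → ℝ)
    (h1 : ∑ i, σ₁ i = 0) (h2 : ∑ i, σ₂ i = 0) (h3 : ∑ i, σ₃ i = 0) :
    (-(1/2 : ℝ) • (Lw sE tE w σ₁ *ᵥ (Ldag *ᵥ σ₂) + Lw sE tE w σ₂ *ᵥ (Ldag *ᵥ σ₁)) +
        (1/2 : ℝ) • (Lw sE tE w ρ *ᵥ circ sE tE w (Ldag *ᵥ σ₁) (Ldag *ᵥ σ₂)))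
      ⬝ᵥ (Ldag *ᵥ σ₃) =
    (1/2 : ℝ) * (deriv (fun t => σ₂ ⬝ᵥ (Gdir σ₁ t *ᵥ σ₃)) 0 +
      deriv (fun t => σ₁ ⬝ᵥ (Gdir σ₂ t *ᵥ σ₃)) 0 -
      deriv (fun t => σ₁ ⬝ᵥ (Gdir σ₃ t *ᵥ σ₂)) 0) := by
  set M := Lw sE tE w ρ + vecMulVec (onesVec n) (onesVec n)
  have hsymm := Lw_isSymm sE tE w
  have hconst : ∀ c : ℝ, Lw sE tE w ρ *ᵥ (fun _ => c) = 0 := fun c => (hker _).2 ⟨c, fun _ => rfl⟩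
  have hMLdag : ∀ σ : Fin n → ℝ, ∑ i, σ i = 0 → M *ᵥ (Ldag *ᵥ σ) = σ := fun σ =>
    hpinv.add_vecMulVec_mulVec_mulVec (hsymm ρ) (fun Φ => (hker Φ).1) (hconst _)
  have hMsymm : M.IsSymm := (hsymm ρ).add (transpose_vecMulVec _ _)
  have hinv : ∀ σ, ∀ᶠ t in 𝓝 (0 : ℝ),
      Gdir σ t * (M + t • Lw sE tE w σ) = 1 ∧ (M + t • Lw sE tE w σ) * Gdir σ t = 1 := by
    intro σ
    obtain ⟨ε, hε, hGε⟩ := hGdir σ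
    filter_upwards [Metric.ball_mem_nhds 0 hε] with t ht
    rw [add_right_comm, ← Lw_smul, ← Lw_add]
    exact hGε t (by simpa using ht)
  have hderiv : ∀ σa σb σc : Fin n → ℝ, ∑ i, σb i = 0 → ∑ i, σc i = 0 →
      deriv (fun t => σb ⬝ᵥ (Gdir σa t *ᵥ σc)) 0 =
        -((Ldag *ᵥ σb) ⬝ᵥ (Lw sE tE w σa *ᵥ (Ldag *ᵥ σc))) :=
    fun σa σb σc hb hc => deriv_dotProduct_inverse_mulVec (hinv σa)
      (by rw [hMsymm.vecMul_eq_mulVec, hMLdag σb hb]) (hMLdag σc hc)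
  have hcirc : (Lw sE tE w ρ *ᵥ circ sE tE w (Ldag *ᵥ σ₁) (Ldag *ᵥ σ₂)) ⬝ᵥ (Ldag *ᵥ σ₃) =
      (Ldag *ᵥ σ₁) ⬝ᵥ (Lw sE tE w σ₃ *ᵥ (Ldag *ᵥ σ₂)) := by
    rw [(hsymm ρ).mulVec_dotProduct,
      hpinv.mulVec_mulVec_eq_self_of_sum_eq_zero (hsymm ρ) (fun Φ => (hker Φ).1) h3,
      circ_dotProduct_eq_dotProduct_Lw_mulVec sE tE w
        (sE_ne_tE_of_Lw_mulVec_const sE tE w hw hρ (hconst 1)) fun e => (hw e).le]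
  rw [hderiv σ₁ σ₂ σ₃ h2 h3, hderiv σ₂ σ₁ σ₃ h1 h3, hderiv σ₃ σ₁ σ₂ h1 h2, add_dotProduct,
    smul_dotProduct, smul_dotProduct, hcirc, add_dotProduct, (hsymm σ₁).mulVec_dotProduct,
    (hsymm σ₂).mulVec_dotProduct, smul_eq_mul, smul_eq_mul]
  ring

/-- Levi-Civita connection via the Koszul formula: the vector
`∇^W_{σ₁}σ₂ = −(1/2)[L(σ₁)L(ρ)^†σ₂ + L(σ₂)L(ρ)^†σ₁] + (1/2)L(ρ)(∇_GL(ρ)^†σ₁ ∘ ∇_GL(ρ)^†σ₂)`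
satisfies the Koszul formula for constant vector fields (whose brackets vanish), where
directional derivatives of the metric are taken through `g(ρ+tσ) = (L(ρ+tσ)+u₀u₀ᵀ)⁻¹`. -/
theorem levi_civita_koszul
    {n : ℕ} {E : Type} [Fintype E] [DecidableEq E]
    (sE tE : E → Fin n) (w : E → ℝ)
    (hw : ∀ e, 0 < w e)
    (hconn : ∀ Φ : Fin n → ℝ, (∀ e, Φ (sE e) = Φ (tE e)) → ∀ i j, Φ i = Φ j)
    (ρ : Fin n → ℝ) (hρ : ∀ i, 0 < ρ i) (hsum : ∑ i, ρ i = 1)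
    (Ldag : Matrix (Fin n) (Fin n) ℝ) (hpinv : IsPInv (Lw sE tE w ρ) Ldag)
    (hker : ∀ Φ : Fin n → ℝ, Lw sE tE w ρ *ᵥ Φ = 0 ↔ ∃ c : ℝ, ∀ i, Φ i = c)
    (Gdir : (Fin n → ℝ) → ℝ → Matrix (Fin n) (Fin n) ℝ)
    (hGdir : ∀ σ : Fin n → ℝ, ∃ ε > (0:ℝ), ∀ t : ℝ, |t| < ε →
      Gdir σ t * (Lw sE tE w (ρ + t • σ) + vecMulVec (onesVec n) (onesVec n)) = 1 ∧
      (Lw sE tE w (ρ + t • σ) + vecMulVec (onesVec n) (onesVec n)) * Gdir σ t = 1)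
    (σ₁ σ₂ σ₃ : Fin n → ℝ)
    (h1 : ∑ i, σ₁ i = 0) (h2 : ∑ i, σ₂ i = 0) (h3 : ∑ i, σ₃ i = 0) :
    (-(1/2 : ℝ) • (Lw sE tE w σ₁ *ᵥ (Ldag *ᵥ σ₂) + Lw sE tE w σ₂ *ᵥ (Ldag *ᵥ σ₁)) +
        (1/2 : ℝ) • (Lw sE tE w ρ *ᵥ circ sE tE w (Ldag *ᵥ σ₁) (Ldag *ᵥ σ₂)))
      ⬝ᵥ (Ldag *ᵥ σ₃) =
    (1/2 : ℝ) * (deriv (fun t => σ₂ ⬝ᵥ (Gdir σ₁ t *ᵥ σ₃)) 0 +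
      deriv (fun t => σ₁ ⬝ᵥ (Gdir σ₂ t *ᵥ σ₃)) 0 -
      deriv (fun t => σ₁ ⬝ᵥ (Gdir σ₃ t *ᵥ σ₂)) 0) :=
  levi_civita_koszul_general sE tE w hw ρ hρ Ldag hpinv hker Gdir hGdir σ₁ σ₂ σ₃ h1 h2 h3
end

section
/- (Volume form of the Wasserstein simplex) Let vol denote the Euclidean volume form on the interior of the probability simplex. The Riemannian volume form of the Wasserstein metric g_W(σ,τ)=σᵀL(ρ)^†τ equals dvol_W = Π(ρ)^{-1/2} dvol, where Π(ρ)=λ₁(ρ)⋯λ_{n-1}(ρ) is the product of the positive eigenvalues of L(ρ). Equivalently, Π(ρ)^{-1} = det(L(ρ)^†+u₀u₀ᵀ) with u₀ the normalized all-ones vector. -/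
open Matrix

lemma pinv_unique' {n : ℕ} {A B C : Matrix (Fin n) (Fin n) ℝ}
    (hB : IsPInv A B) (hC : IsPInv A C) : B = C := by
  obtain ⟨hB1, hB2, hB3, hB4⟩ := hB
  obtain ⟨hC1, hC2, hC3, hC4⟩ := hC
  have hAB : A * B = A * C := by
    calc A * B = (A * B)ᵀ := hB3.symm
      _ = Bᵀ * Aᵀ := by rw [transpose_mul]
      _ = Bᵀ * (A * C * A)ᵀ := by rw [hC1]
      _ = Bᵀ * (Aᵀ * (A * C)ᵀ) := by rw [transpose_mul]
      _ = (Bᵀ * Aᵀ) * (A * C) := by rw [hC3, Matrix.mul_assoc]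
      _ = (A * B)ᵀ * (A * C) := by rw [transpose_mul]
      _ = (A * B) * (A * C) := by rw [hB3]
      _ = (A * B * A) * C := by simp only [Matrix.mul_assoc]
      _ = A * C := by rw [hB1]
  have hBA : B * A = C * A := by
    calc B * A = (B * A)ᵀ := hB4.symm
      _ = Aᵀ * Bᵀ := by rw [transpose_mul]
      _ = (A * C * A)ᵀ * Bᵀ := by rw [hC1]
      _ = (A * (C * A))ᵀ * Bᵀ := by rw [Matrix.mul_assoc]
      _ = ((C * A)ᵀ * Aᵀ) * Bᵀ := by rw [transpose_mul]
      _ = ((C * A) * Aᵀ) * Bᵀ := by rw [hC4]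
      _ = (C * A) * (B * A)ᵀ := by rw [Matrix.mul_assoc, ← transpose_mul]
      _ = (C * A) * (B * A) := by rw [hB4]
      _ = C * (A * B * A) := by simp only [Matrix.mul_assoc]
      _ = C * A := by rw [hB1]
  calc B = B * A * B := hB2.symm
    _ = C * A * B := by rw [hBA]
    _ = C * (A * B) := by rw [Matrix.mul_assoc]
    _ = C * (A * C) := by rw [hAB]
    _ = C * A * C := by rw [Matrix.mul_assoc]
    _ = C := hC2

/-- Volume form of the Wasserstein simplex: with
`Π(ρ) = λ₁(ρ)⋯λ_{n−1}(ρ)` the product of positive eigenvalues of `L(ρ)`, the volume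
density of `g_W` relative to the Euclidean volume is `√det(g(ρ)) = Π(ρ)^{-1/2}`, i.e.
`det(L(ρ)^† + u₀u₀ᵀ) = Π(ρ)⁻¹`. -/
theorem wasserstein_volume_form
    {n : ℕ} {E : Type} [Fintype E] [DecidableEq E]
    (sE tE : E → Fin n) (w : E → ℝ)
    (hw : ∀ e, 0 < w e)
    (hconn : ∀ Φ : Fin n → ℝ, (∀ e, Φ (sE e) = Φ (tE e)) → ∀ i j, Φ i = Φ j)
    (ρ : Fin n → ℝ) (hρ : ∀ i, 0 < ρ i) (hsum : ∑ i, ρ i = 1)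
    (Ldag : Matrix (Fin n) (Fin n) ℝ) (hpinv : IsPInv (Lw sE tE w ρ) Ldag)
    -- orthogonal eigendecomposition L(ρ) = U diag(d) Uᵀ, with eigenvalue 0 at index i0
    -- and corresponding eigenvector u₀, all other eigenvalues positive
    (U : Matrix (Fin n) (Fin n) ℝ) (d : Fin n → ℝ) (i0 : Fin n)
    (hU : Uᵀ * U = 1)
    (hdecomp : Lw sE tE w ρ = U * Matrix.diagonal d * Uᵀ)
    (hd0 : d i0 = 0) (hdpos : ∀ i, i ≠ i0 → 0 < d i)
    (hU0 : ∀ i, U i i0 = onesVec n i) :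
    (Ldag + vecMulVec (onesVec n) (onesVec n)).det =
      (∏ i ∈ Finset.univ.erase i0, d i)⁻¹ ∧
    Real.sqrt ((Ldag + vecMulVec (onesVec n) (onesVec n)).det) =
      (∏ i ∈ Finset.univ.erase i0, d i) ^ (-(1:ℝ)/2) := by
  classical
  have hUU' : U * Uᵀ = 1 := mul_eq_one_comm.mp hU
  have conj : ∀ f g : Fin n → ℝ, (U * Matrix.diagonal f * Uᵀ) * (U * Matrix.diagonal g * Uᵀ)
      = U * Matrix.diagonal (fun i => f i * g i) * Uᵀ := by
    intro f g
    simp only [Matrix.mul_assoc]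
    rw [show Uᵀ * (U * (Matrix.diagonal g * Uᵀ)) = Matrix.diagonal g * Uᵀ by
      rw [← Matrix.mul_assoc, hU, Matrix.one_mul]]
    rw [show Matrix.diagonal f * (Matrix.diagonal g * Uᵀ)
        = Matrix.diagonal (fun i => f i * g i) * Uᵀ by
      rw [← Matrix.mul_assoc, Matrix.diagonal_mul_diagonal]]
  have sym : ∀ f : Fin n → ℝ, (U * Matrix.diagonal f * Uᵀ)ᵀ = U * Matrix.diagonal f * Uᵀ := by
    intro f
    rw [transpose_mul, transpose_mul, transpose_transpose, Matrix.diagonal_transpose,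
      Matrix.mul_assoc]
  set dp : Fin n → ℝ := fun i => if i = i0 then 0 else (d i)⁻¹ with hdp
  have hpinv2 : IsPInv (Lw sE tE w ρ) (U * Matrix.diagonal dp * Uᵀ) := by
    rw [hdecomp]
    have hfun1 : (fun i => d i * dp i * d i) = d := by
      funext i
      by_cases h : i = i0
      · simp [h, hd0, hdp]
      · simp only [hdp]
        rw [if_neg h, mul_inv_cancel₀ (hdpos i h).ne', one_mul]
    have hfun2 : (fun i => dp i * d i * dp i) = dp := by
      funext i
      by_cases h : i = i0
      · simp [h, hdp]
      · simp only [hdp]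
        rw [if_neg h, inv_mul_cancel₀ (hdpos i h).ne', one_mul]
    refine ⟨?_, ?_, ?_, ?_⟩
    · simp only [conj]
      rw [hfun1]
    · simp only [conj]
      rw [hfun2]
    · rw [conj, sym]
    · rw [conj, sym]
  have hLdag : Ldag = U * Matrix.diagonal dp * Uᵀ := pinv_unique' hpinv hpinv2
  set e : Fin n → ℝ := fun i => if i = i0 then 1 else 0 with he
  have hvmv : vecMulVec (onesVec n) (onesVec n) = U * Matrix.diagonal e * Uᵀ := by
    ext i j
    rw [vecMulVec_apply, Matrix.mul_apply]
    have h2 : ∀ k, (U * Matrix.diagonal e) i k = U i k * e k :=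
      fun k => Matrix.mul_diagonal ..
    simp only [h2, transpose_apply, he]
    simp [mul_ite, ite_mul, Finset.sum_ite_eq', hU0]
  have hdet : (Ldag + vecMulVec (onesVec n) (onesVec n)).det
      = (∏ i ∈ Finset.univ.erase i0, d i)⁻¹ := by
    rw [hLdag, hvmv, ← Matrix.add_mul, ← Matrix.mul_add, Matrix.diagonal_add]
    rw [Matrix.det_mul, Matrix.det_mul, Matrix.det_diagonal]
    have hdet1 : U.det * Uᵀ.det = 1 := by
      rw [mul_comm, ← Matrix.det_mul, hU, Matrix.det_one]
    have hre : U.det * (∏ i, (dp i + e i)) * Uᵀ.det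
        = (U.det * Uᵀ.det) * ∏ i, (dp i + e i) := by ring
    rw [hre, hdet1, one_mul]
    rw [← Finset.mul_prod_erase Finset.univ _ (Finset.mem_univ i0)]
    have h1 : ∏ i ∈ Finset.univ.erase i0, (dp i + e i)
        = (∏ i ∈ Finset.univ.erase i0, d i)⁻¹ := by
      rw [← Finset.prod_inv_distrib]
      refine Finset.prod_congr rfl fun i hi => ?_
      have hne : i ≠ i0 := (Finset.mem_erase.mp hi).1
      simp [hdp, he, hne]
    rw [h1]
    simp [hdp, he]
  refine ⟨hdet, ?_⟩
  rw [hdet]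
  have hP : 0 < ∏ i ∈ Finset.univ.erase i0, d i :=
    Finset.prod_pos fun i hi => hdpos i (Finset.mem_erase.mp hi).1
  rw [show (-(1:ℝ)/2) = -(1/2 : ℝ) by ring, Real.rpow_neg hP.le, ← Real.sqrt_eq_rpow,
    Real.sqrt_inv]
end
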